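/- Fix κ>0, ν∈(−1,1/2], γ>0, and C² functions f_rad,f_tan:(0,∞)→ℝ with f_rad(1)=f_tan(1)=0 and f'_rad(1)=f'_tan(1)=(1−ν)/(1+ν). Define p̂_rad(δ,η)=κ(3f_rad(δ/η)η^γ+(η^γ−1)/γ) and p̂_tan(δ,η)=κ(−(3/2)(f_tan(δ/η)+1−δ/η)η^γ+(η^γ−1)/γ) on (0,∞)². Then (p̂_rad,p̂_tan) is hyperelastic if and only if f_tan(y)=f_rad(y)+3(1−γ)y∫₁^y f_rad(s)s^{−2} ds for all y>0. Moreover, if γ≠1 and this identity holds, then a stored energy function is given by ŵ(δ,η)=κ[η^{γ−1}(3S(δ/η)−(1/γ)(δ/η)^{−1}+1/(γ−1))+δ^{−1}/γ−1/(γ−1)], where S(y)=∫₁^y f_rad(s)s^{−2} ds. -/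

import Mathlib

open Real Set Filter Topology intervalIntegral MeasureTheory

noncomputable section

/-- `w` is a stored energy function for `(p̂_rad, p̂_tan)`: `w` is `C³` on `(0,∞)²`,
`w(1,1) = 0`, `p̂_rad = δ²∂_δw` and `p̂_tan = p̂_rad + (3/2)δη∂_ηw`. -/
def IsStoredEnergy (w prad ptan : ℝ → ℝ → ℝ) : Prop :=
  ContDiffOn ℝ 3 (fun p : ℝ × ℝ => w p.1 p.2) (Ioi 0 ×ˢ Ioi 0) ∧
  w 1 1 = 0 ∧
  (∀ δ η : ℝ, 0 < δ → 0 < η → prad δ η = δ ^ 2 * deriv (fun d => w d η) δ) ∧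
  (∀ δ η : ℝ, 0 < δ → 0 < η →
    ptan δ η = prad δ η + (3 / 2) * δ * η * deriv (fun e => w δ e) η)

/-- A pair is hyperelastic if it admits a stored energy function. -/
def IsHyperelastic (prad ptan : ℝ → ℝ → ℝ) : Prop :=
  ∃ w : ℝ → ℝ → ℝ, IsStoredEnergy w prad ptan

/-- The generalized polytropic radial pressure
`p̂_rad(δ,η) = κ(3 f_rad(δ/η) η^γ + (η^γ − 1)/γ)`. -/
def gpPrad (κ γ : ℝ) (frad : ℝ → ℝ) : ℝ → ℝ → ℝ :=
  fun δ η => κ * (3 * frad (δ / η) * η ^ γ + (η ^ γ - 1) / γ)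

/-- The generalized polytropic tangential pressure
`p̂_tan(δ,η) = κ(−(3/2)(f_tan(δ/η) + 1 − δ/η) η^γ + (η^γ − 1)/γ)`. -/
def gpPtan (κ γ : ℝ) (ftan : ℝ → ℝ) : ℝ → ℝ → ℝ :=
  fun δ η => κ * (-(3 / 2) * (ftan (δ / η) + 1 - δ / η) * η ^ γ + (η ^ γ - 1) / γ)

def Sfun (frad : ℝ → ℝ) (y : ℝ) : ℝ := ∫ s in (1:ℝ)..y, frad s / s ^ 2

theorem hasDerivAt_Sfun {frad : ℝ → ℝ} (hfr : ContinuousOn frad (Ioi 0)) {y : ℝ} (hy : 0 < y) :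
    HasDerivAt (Sfun frad) (frad y / y ^ 2) y := by
  have hcont : ContinuousOn (fun s => frad s / s ^ 2) (Ioi 0) :=
    hfr.div (by fun_prop) (fun s hs => pow_ne_zero _ (ne_of_gt hs))
  have hsub : uIcc (1:ℝ) y ⊆ Ioi 0 := by
    intro s hs
    rcases le_total (1:ℝ) y with h | h
    · have := (uIcc_of_le h ▸ hs); exact lt_of_lt_of_le one_pos this.1
    · have := (uIcc_of_ge h ▸ hs); exact lt_of_lt_of_le hy this.1
  exact integral_hasDerivAt_right
    ((hcont.mono hsub).intervalIntegrable)
    (hcont.stronglyMeasurableAtFilter isOpen_Ioi _ hy)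
    ((hcont y hy).continuousAt (isOpen_Ioi.mem_nhds hy))

theorem contDiffOn_Sfun {frad : ℝ → ℝ} (hfr : ContDiffOn ℝ 2 frad (Ioi 0)) :
    ContDiffOn ℝ 3 (Sfun frad) (Ioi 0) := by
  rw [show (3 : WithTop ℕ∞) = 2 + 1 by norm_num, contDiffOn_succ_iff_deriv_of_isOpen isOpen_Ioi]
  have hd : ∀ y ∈ Ioi (0:ℝ), HasDerivAt (Sfun frad) (frad y / y ^ 2) y :=
    fun y hy => hasDerivAt_Sfun hfr.continuousOn hy
  refine ⟨fun y hy => ((hd y hy).differentiableAt).differentiableWithinAt, by simp, ?_⟩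
  have : EqOn (deriv (Sfun frad)) (fun y => frad y / y ^ 2) (Ioi 0) :=
    fun y hy => (hd y hy).deriv
  exact (hfr.div ((contDiff_id.pow 2).contDiffOn) (fun s hs => pow_ne_zero _ (ne_of_gt hs))).congr this

/-- master stored energy lemma -/
theorem isStoredEnergy_master (κ γ c : ℝ) (G : ℝ → ℝ) (hγ : 0 < γ)
    (frad ftan : ℝ → ℝ)
    (hfr : ContDiffOn ℝ 2 frad (Ioi 0))
    (hG : ContDiffOn ℝ 3 G (Ioi 0)) (hG1 : G 1 = -c)
    (hG' : ∀ η : ℝ, 0 < η → HasDerivAt G ((1 - c * (γ - 1)) * η ^ (γ - 2)) η)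
    (hid : ∀ y : ℝ, 0 < y → ftan y = frad y + 3 * (1 - γ) * y * Sfun frad y) :
    IsStoredEnergy
      (fun δ η => κ * (η ^ (γ - 1) *
          (3 * Sfun frad (δ / η) - (1 / γ) * (δ / η)⁻¹ + c) + δ⁻¹ / γ + G η))
      (gpPrad κ γ frad) (gpPtan κ γ ftan) := by
  have hγ0 : γ ≠ 0 := ne_of_gt hγ
  refine ⟨?_, ?_, ?_, ?_⟩
  · -- C³
    set U : Set (ℝ × ℝ) := Ioi 0 ×ˢ Ioi 0 with hU
    have hdiv : ContDiffOn ℝ 3 (fun p : ℝ × ℝ => p.1 / p.2) U :=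
      contDiff_fst.contDiffOn.div contDiff_snd.contDiffOn (fun p hp => ne_of_gt hp.2)
    have hmaps : MapsTo (fun p : ℝ × ℝ => p.1 / p.2) U (Ioi 0) :=
      fun p hp => show (0:ℝ) < p.1 / p.2 from div_pos hp.1 hp.2
    have hS : ContDiffOn ℝ 3 (fun p : ℝ × ℝ => Sfun frad (p.1 / p.2)) U :=
      (contDiffOn_Sfun hfr).comp hdiv hmaps
    have hrpow : ContDiffOn ℝ 3 (fun p : ℝ × ℝ => p.2 ^ (γ - 1)) U := by
      have h1 : ContDiffOn ℝ 3 (fun x : ℝ => x ^ (γ - 1)) (Ioi 0) :=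
        fun x hx => (contDiffAt_rpow_const_of_ne (ne_of_gt hx)).contDiffWithinAt
      exact h1.comp contDiff_snd.contDiffOn (fun p hp => hp.2)
    have hinv1 : ContDiffOn ℝ 3 (fun p : ℝ × ℝ => (p.1 / p.2)⁻¹) U :=
      hdiv.inv (fun p hp => ne_of_gt (hmaps hp))
    have hinv2 : ContDiffOn ℝ 3 (fun p : ℝ × ℝ => (p.1)⁻¹) U :=
      contDiff_fst.contDiffOn.inv (fun p hp => ne_of_gt hp.1)
    have hGc : ContDiffOn ℝ 3 (fun p : ℝ × ℝ => G p.2) U :=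
      hG.comp contDiff_snd.contDiffOn (fun p hp => hp.2)
    exact contDiffOn_const.mul (((hrpow.mul (((contDiffOn_const.mul hS).sub
        (contDiffOn_const.mul hinv1)).add contDiffOn_const)).add
        (hinv2.div_const γ)).add hGc)
  · -- w 1 1 = 0
    have h1 : Sfun frad ((1:ℝ) / 1) = 0 := by norm_num [Sfun]
    show κ * ((1:ℝ) ^ (γ - 1) * (3 * Sfun frad (1 / 1) - 1 / γ * ((1:ℝ) / 1)⁻¹ + c) + (1:ℝ)⁻¹ / γ + G 1) = 0
    rw [h1, hG1, Real.one_rpow]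
    field_simp
    ring
  · -- prad
    intro δ η hδ hη
    have hδ0 := ne_of_gt hδ; have hη0 := ne_of_gt hη
    have hy : 0 < δ / η := div_pos hδ hη
    have hd1 : HasDerivAt (fun d : ℝ => d / η) (1 / η) δ := by
      simpa using (hasDerivAt_id δ).div_const η
    have hdS : HasDerivAt (fun d : ℝ => Sfun frad (d / η))
        (frad (δ / η) / (δ / η) ^ 2 * (1 / η)) δ :=
      by have := (hasDerivAt_Sfun hfr.continuousOn hy).comp δ hd1; exact this
    have hdI : HasDerivAt (fun d : ℝ => (d / η)⁻¹)
        (-(1 / η) / (δ / η) ^ 2) δ := hd1.inv (ne_of_gt hy)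
    have hdinv : HasDerivAt (fun d : ℝ => d⁻¹) (-(δ ^ 2)⁻¹) δ := hasDerivAt_inv hδ0
    have hw : HasDerivAt (fun d : ℝ => κ * (η ^ (γ - 1) *
          (3 * Sfun frad (d / η) - (1 / γ) * (d / η)⁻¹ + c) + d⁻¹ / γ + G η))
        (κ * (η ^ (γ - 1) *
          (3 * (frad (δ / η) / (δ / η) ^ 2 * (1 / η)) - (1 / γ) * (-(1 / η) / (δ / η) ^ 2))
          + (-(δ ^ 2)⁻¹) / γ)) δ := by
      exact ((((hdS.const_mul 3).sub (hdI.const_mul (1/γ))).add_const c).const_mul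
          (η ^ (γ - 1)) |>.add (hdinv.div_const γ) |>.add_const (G η)).const_mul κ
    rw [hw.deriv]
    rw [Real.rpow_sub_one hη0]
    unfold gpPrad
    have hy0 : (δ / η) ≠ 0 := ne_of_gt hy
    field_simp
    ring
  · -- ptan
    intro δ η hδ hη
    have hδ0 := ne_of_gt hδ; have hη0 := ne_of_gt hη
    have hy : 0 < δ / η := div_pos hδ hη
    have hy0 : (δ / η) ≠ 0 := ne_of_gt hy
    have hA : HasDerivAt (fun e : ℝ => e ^ (γ - 1)) ((γ - 1) * η ^ (γ - 2)) η := by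
      have := Real.hasDerivAt_rpow_const (p := γ - 1) (Or.inl hη0) (x := η)
      rwa [show γ - 1 - 1 = γ - 2 by ring] at this
    have hq : HasDerivAt (fun e : ℝ => δ / e) (δ * -(η ^ 2)⁻¹) η := by
      simpa [div_eq_mul_inv] using (hasDerivAt_inv hη0).const_mul δ
    have hS' : HasDerivAt (fun e : ℝ => Sfun frad (δ / e))
        (frad (δ / η) / (δ / η) ^ 2 * (δ * -(η ^ 2)⁻¹)) η :=
      (hasDerivAt_Sfun hfr.continuousOn hy).comp η hq
    have hI' : HasDerivAt (fun e : ℝ => (δ / e)⁻¹)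
        (-(δ * -(η ^ 2)⁻¹) / (δ / η) ^ 2) η := hq.inv hy0
    have hw : HasDerivAt (fun e : ℝ => κ * (e ^ (γ - 1) *
          (3 * Sfun frad (δ / e) - 1 / γ * (δ / e)⁻¹ + c) + δ⁻¹ / γ + G e))
        (κ * (((γ - 1) * η ^ (γ - 2)) *
            (3 * Sfun frad (δ / η) - 1 / γ * (δ / η)⁻¹ + c)
          + η ^ (γ - 1) * (3 * (frad (δ / η) / (δ / η) ^ 2 * (δ * -(η ^ 2)⁻¹))
            - 1 / γ * (-(δ * -(η ^ 2)⁻¹) / (δ / η) ^ 2))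
          + (1 - c * (γ - 1)) * η ^ (γ - 2))) η := by
      exact (((hA.mul (((hS'.const_mul 3).sub (hI'.const_mul (1/γ))).add_const c)).add_const
        (δ⁻¹ / γ)).add (hG' η hη)).const_mul κ
    rw [hw.deriv]
    have e2 : η ^ (γ - 2) = η ^ γ / η / η := by
      rw [show γ - 2 = γ - 1 - 1 by ring, Real.rpow_sub_one hη0, Real.rpow_sub_one hη0]
    rw [Real.rpow_sub_one hη0, e2]
    unfold gpPtan gpPrad
    rw [hid (δ / η) hy]
    field_simp
    ring

theorem forward_dir (κ γ : ℝ) (hκ : 0 < κ) (hγ : 0 < γ)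
    (frad ftan : ℝ → ℝ)
    (hfr : ContDiffOn ℝ 2 frad (Ioi 0)) (hft : ContDiffOn ℝ 2 ftan (Ioi 0))
    (hfr1 : frad 1 = 0) (hft1 : ftan 1 = 0)
    (hhy : IsHyperelastic (gpPrad κ γ frad) (gpPtan κ γ ftan)) :
    ∀ y : ℝ, 0 < y → ftan y = frad y + 3 * (1 - γ) * y * Sfun frad y := by
  obtain ⟨w, hC, hw11, hrad, htan⟩ := hhy
  set W : ℝ × ℝ → ℝ := fun p => w p.1 p.2 with hWdef
  have hU : IsOpen (Ioi (0:ℝ) ×ˢ Ioi (0:ℝ)) := isOpen_Ioi.prod isOpen_Ioi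
  have hCat : ∀ {δ η : ℝ}, 0 < δ → 0 < η → ContDiffAt ℝ 3 W (δ, η) :=
    fun hδ hη => hC.contDiffAt (hU.mem_nhds ⟨hδ, hη⟩)
  have hdiffat : ∀ {δ η : ℝ}, 0 < δ → 0 < η → DifferentiableAt ℝ W (δ, η) :=
    fun hδ hη => (hCat hδ hη).differentiableAt (by norm_num)
  have hP : ∀ δ η : ℝ, 0 < δ → 0 < η →
      fderiv ℝ W (δ, η) (1, 0) = gpPrad κ γ frad δ η / δ ^ 2 := by
    intro δ η hδ hη
    have hline : HasDerivAt (fun d => W (d, η)) (fderiv ℝ W (δ, η) (1, 0)) δ :=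
      by have := (hdiffat hδ hη).hasFDerivAt.comp_hasDerivAt δ
                  ((hasDerivAt_id δ).prodMk (hasDerivAt_const δ η)); exact this
    have h2 := hrad δ η hδ hη
    rw [show deriv (fun d => w d η) δ = fderiv ℝ W (δ, η) (1, 0) from hline.deriv] at h2
    rw [h2]; field_simp
  have hQ : ∀ δ η : ℝ, 0 < δ → 0 < η →
      fderiv ℝ W (δ, η) (0, 1) =
        (gpPtan κ γ ftan δ η - gpPrad κ γ frad δ η) * 2 / (3 * δ * η) := by
    intro δ η hδ hη
    have hline : HasDerivAt (fun e => W (δ, e)) (fderiv ℝ W (δ, η) (0, 1)) η :=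
      (hdiffat hδ hη).hasFDerivAt.comp_hasDerivAt η
        ((hasDerivAt_const η δ).prodMk (hasDerivAt_id η))
    have h2 := htan δ η hδ hη
    rw [show deriv (fun e => w δ e) η = fderiv ℝ W (δ, η) (0, 1) from hline.deriv] at h2
    field_simp
    linarith [h2]
  -- the ODE from Clairaut
  have hODE : ∀ x : ℝ, 0 < x →
      x * deriv ftan x - ftan x = x * deriv frad x - (3 * γ - 2) * frad x := by
    intro x hx
    have hfr' : HasDerivAt frad (deriv frad x) x :=
      ((hfr.contDiffAt (isOpen_Ioi.mem_nhds hx)).differentiableAt (by norm_num)).hasDerivAt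
    have hft' : HasDerivAt ftan (deriv ftan x) x :=
      ((hft.contDiffAt (isOpen_Ioi.mem_nhds hx)).differentiableAt (by norm_num)).hasDerivAt
    have hf'' : HasFDerivAt (fderiv ℝ W) (fderiv ℝ (fderiv ℝ W) (x, 1)) (x, 1) :=
      (((hCat hx one_pos).fderiv_right (m := 2) (by norm_num)).differentiableAt
        (by norm_num)).hasFDerivAt
    -- A side
    have hq : HasDerivAt (fun e : ℝ => x / e) (x * -((1:ℝ) ^ 2)⁻¹) 1 := by
      simpa [div_eq_mul_inv] using (hasDerivAt_inv one_ne_zero).const_mul x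
    have hfrx1 : HasDerivAt frad (deriv frad x) (x / 1) := by rwa [div_one]
    have hfc : HasDerivAt (fun e : ℝ => frad (x / e))
        (deriv frad x * (x * -((1:ℝ) ^ 2)⁻¹)) 1 := hfrx1.comp 1 hq
    have hpow1 : HasDerivAt (fun e : ℝ => e ^ γ) (γ * (1:ℝ) ^ (γ - 1)) 1 :=
      Real.hasDerivAt_rpow_const (Or.inl one_ne_zero)
    have hA0 : HasDerivAt (fun e : ℝ => κ * (3 * frad (x / e) * e ^ γ + (e ^ γ - 1) / γ) / x ^ 2)
        (κ * (3 * (deriv frad x * (x * -((1:ℝ) ^ 2)⁻¹)) * (1:ℝ) ^ γ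
            + 3 * frad (x / 1) * (γ * (1:ℝ) ^ (γ - 1)) + γ * (1:ℝ) ^ (γ - 1) / γ) / x ^ 2) 1 := by
      exact ((((hfc.const_mul 3).mul hpow1).add ((hpow1.sub_const 1).div_const γ)).const_mul
        κ).div_const (x ^ 2)
    have hA : HasDerivAt (fun e : ℝ => gpPrad κ γ frad x e / x ^ 2)
        (κ * (3 * (γ * frad x - x * deriv frad x) + 1) / x ^ 2) 1 := by
      have := hA0
      simp only [Real.one_rpow, div_one, one_pow, inv_one, mul_one] at this
      rw [div_self (ne_of_gt hγ)] at this
      unfold gpPrad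
      convert this using 1
      ring
    have hA1 : HasDerivAt (fun e : ℝ => fderiv ℝ W (x, e) (1, 0))
        (κ * (3 * (γ * frad x - x * deriv frad x) + 1) / x ^ 2) 1 := by
      apply hA.congr_of_eventuallyEq
      filter_upwards [isOpen_Ioi.mem_nhds (show (1:ℝ) ∈ Ioi 0 by norm_num)] with e he
      exact hP x e hx he
    have hA2 : HasDerivAt (fun e : ℝ => fderiv ℝ W (x, e) (1, 0))
        (fderiv ℝ (fderiv ℝ W) (x, 1) (0, 1) (1, 0)) 1 := by
      have h1 : HasDerivAt (fun e : ℝ => fderiv ℝ W (x, e))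
          (fderiv ℝ (fderiv ℝ W) (x, 1) (0, 1)) 1 :=
        hf''.comp_hasDerivAt 1 ((hasDerivAt_const 1 x).prodMk (hasDerivAt_id 1))
      simpa using h1.clm_apply (hasDerivAt_const 1 ((1:ℝ), (0:ℝ)))
    have keyA := hA1.unique hA2
    -- B side
    have hnum : HasDerivAt (fun d : ℝ => -ftan d - 1 + d - 2 * frad d)
        (-deriv ftan x - 0 + 1 - 2 * deriv frad x) x := by
      rw [sub_zero]; exact (((hft'.neg.sub_const 1).add (hasDerivAt_id x)).sub (hfr'.const_mul 2))
    have hB0 : HasDerivAt (fun d : ℝ => κ * (-ftan d - 1 + d - 2 * frad d) / d)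
        ((κ * (-deriv ftan x - 0 + 1 - 2 * deriv frad x) * x
          - κ * (-ftan x - 1 + x - 2 * frad x) * 1) / x ^ 2) x :=
      (hnum.const_mul κ).div (hasDerivAt_id x) (ne_of_gt hx)
    have hB1 : HasDerivAt (fun d : ℝ => fderiv ℝ W (d, 1) (0, 1))
        ((κ * (-deriv ftan x - 0 + 1 - 2 * deriv frad x) * x
          - κ * (-ftan x - 1 + x - 2 * frad x) * 1) / x ^ 2) x := by
      apply hB0.congr_of_eventuallyEq
      filter_upwards [isOpen_Ioi.mem_nhds hx] with d hd
      rw [hQ d 1 hd one_pos]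
      unfold gpPtan gpPrad
      rw [div_one]
      simp only [Real.one_rpow]
      field_simp
      ring
    have hB2 : HasDerivAt (fun d : ℝ => fderiv ℝ W (d, 1) (0, 1))
        (fderiv ℝ (fderiv ℝ W) (x, 1) (1, 0) (0, 1)) x := by
      have h1 : HasDerivAt (fun d : ℝ => fderiv ℝ W (d, 1))
          (fderiv ℝ (fderiv ℝ W) (x, 1) (1, 0)) x :=
        hf''.comp_hasDerivAt x ((hasDerivAt_id x).prodMk (hasDerivAt_const x 1))
      simpa using h1.clm_apply (hasDerivAt_const x ((0:ℝ), (1:ℝ)))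
    have keyB := hB1.unique hB2
    have hsymm : fderiv ℝ (fderiv ℝ W) (x, 1) (0, 1) (1, 0)
        = fderiv ℝ (fderiv ℝ W) (x, 1) (1, 0) (0, 1) :=
      ((hCat hx one_pos).isSymmSndFDerivAt (by norm_num)) _ _
    have key : κ * (3 * (γ * frad x - x * deriv frad x) + 1) / x ^ 2
        = (κ * (-deriv ftan x - 0 + 1 - 2 * deriv frad x) * x
          - κ * (-ftan x - 1 + x - 2 * frad x) * 1) / x ^ 2 := by
      rw [keyA, hsymm, ← keyB]
    rw [div_eq_div_iff (pow_ne_zero 2 (ne_of_gt hx)) (pow_ne_zero 2 (ne_of_gt hx))] at key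
    have key2 := mul_right_cancel₀ (pow_ne_zero 2 (ne_of_gt hx)) key
    have key3 : κ * (3 * (γ * frad x - x * deriv frad x) + 1)
        = κ * ((x * deriv ftan x - ftan x) * (-1) + (x * deriv frad x) * (-2)
            + 1 + 2 * frad x) := by linear_combination key2
    have key4 := mul_left_cancel₀ (ne_of_gt hκ) key3
    linear_combination key4
  -- integrate the ODE
  intro y hy
  set g : ℝ → ℝ := fun t => (ftan t - frad t) / t - 3 * (1 - γ) * Sfun frad t with hgdef
  have hgd : ∀ x ∈ Ioi (0:ℝ), HasDerivAt g 0 x := by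
    intro x hx
    rw [mem_Ioi] at hx
    have hfr' : HasDerivAt frad (deriv frad x) x :=
      ((hfr.contDiffAt (isOpen_Ioi.mem_nhds hx)).differentiableAt (by norm_num)).hasDerivAt
    have hft' : HasDerivAt ftan (deriv ftan x) x :=
      ((hft.contDiffAt (isOpen_Ioi.mem_nhds hx)).differentiableAt (by norm_num)).hasDerivAt
    have h0 : HasDerivAt g
        (((deriv ftan x - deriv frad x) * x - (ftan x - frad x) * 1) / x ^ 2
          - 3 * (1 - γ) * (frad x / x ^ 2)) x :=
      ((hft'.sub hfr').div (hasDerivAt_id x) (ne_of_gt hx)).sub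
        ((hasDerivAt_Sfun hfr.continuousOn hx).const_mul (3 * (1 - γ)))
    have hz : ((deriv ftan x - deriv frad x) * x - (ftan x - frad x) * 1) / x ^ 2
          - 3 * (1 - γ) * (frad x / x ^ 2) = 0 := by
      have h := hODE x hx
      field_simp
      linear_combination h
    rwa [hz] at h0
  have hgconst : g y = g 1 :=
    (convex_Ioi (0:ℝ)).is_const_of_fderivWithin_eq_zero
      (fun x hx => ((hgd x hx).differentiableAt).differentiableWithinAt)
      (fun x hx => by
        rw [fderivWithin_of_isOpen isOpen_Ioi hx, (hgd x hx).hasFDerivAt.fderiv]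
        ext; simp)
      hy (mem_Ioi.mpr one_pos)
  have hg1 : g 1 = 0 := by
    simp [hgdef, hfr1, hft1, Sfun]
  rw [hg1] at hgconst
  have : (ftan y - frad y) / y - 3 * (1 - γ) * Sfun frad y = 0 := hgconst
  field_simp at this
  linear_combination this

/-- The generalized polytropic constitutive function is hyperelastic iff
`f_tan(y) = f_rad(y) + 3(1−γ)y∫₁ʸ f_rad(s)s⁻² ds`; in that case (for `γ ≠ 1`) a
stored energy function is given by the displayed formula with
`S(y) = ∫₁ʸ f_rad(s)s⁻² ds`. -/
theorem gp_hyperelastic_iff (κ ν γ : ℝ) (hκ : 0 < κ)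
    (hν : ν ∈ Ioc (-1 : ℝ) (1/2)) (hγ : 0 < γ)
    (frad ftan : ℝ → ℝ)
    (hfr : ContDiffOn ℝ 2 frad (Ioi 0)) (hft : ContDiffOn ℝ 2 ftan (Ioi 0))
    (hfr1 : frad 1 = 0) (hft1 : ftan 1 = 0)
    (hfr1' : deriv frad 1 = (1 - ν) / (1 + ν))
    (hft1' : deriv ftan 1 = (1 - ν) / (1 + ν)) :
    (IsHyperelastic (gpPrad κ γ frad) (gpPtan κ γ ftan) ↔
      ∀ y : ℝ, 0 < y →
        ftan y = frad y + 3 * (1 - γ) * y * ∫ s in (1:ℝ)..y, frad s / s ^ 2) ∧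
    (γ ≠ 1 →
      (∀ y : ℝ, 0 < y →
        ftan y = frad y + 3 * (1 - γ) * y * ∫ s in (1:ℝ)..y, frad s / s ^ 2) →
      IsStoredEnergy
        (fun δ η => κ * (η ^ (γ - 1) *
            (3 * (∫ s in (1:ℝ)..(δ / η), frad s / s ^ 2)
              - (1 / γ) * (δ / η)⁻¹ + 1 / (γ - 1))
          + δ⁻¹ / γ - 1 / (γ - 1)))
        (gpPrad κ γ frad) (gpPtan κ γ ftan)) := by
  have hconstruct : γ ≠ 1 →
      (∀ y : ℝ, 0 < y → ftan y = frad y + 3 * (1 - γ) * y * Sfun frad y) →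
      IsStoredEnergy
        (fun δ η => κ * (η ^ (γ - 1) *
            (3 * (∫ s in (1:ℝ)..(δ / η), frad s / s ^ 2)
              - (1 / γ) * (δ / η)⁻¹ + 1 / (γ - 1))
          + δ⁻¹ / γ - 1 / (γ - 1)))
        (gpPrad κ γ frad) (gpPtan κ γ ftan) := by
    intro hγ1 hid
    have hG' : ∀ η : ℝ, 0 < η → HasDerivAt (fun _ : ℝ => -(1/(γ-1)))
        ((1 - 1/(γ-1)*(γ-1)) * η ^ (γ-2)) η := by
      intro η hη
      have h0 : (1 - 1/(γ-1)*(γ-1)) = 0 := by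
        field_simp [sub_ne_zero.mpr hγ1]
        ring
      rw [h0, zero_mul]
      exact hasDerivAt_const η _
    have hm := isStoredEnergy_master κ γ (1/(γ-1)) (fun _ => -(1/(γ-1))) hγ frad ftan hfr
      contDiffOn_const rfl hG' hid
    have hfe : (fun δ η => κ * (η ^ (γ - 1) *
            (3 * Sfun frad (δ / η) - 1 / γ * (δ / η)⁻¹ + 1/(γ-1))
          + δ⁻¹ / γ + (fun _ : ℝ => -(1/(γ-1))) η))
        = (fun δ η => κ * (η ^ (γ - 1) *
            (3 * (∫ s in (1:ℝ)..(δ / η), frad s / s ^ 2)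
              - (1 / γ) * (δ / η)⁻¹ + 1 / (γ - 1))
          + δ⁻¹ / γ - 1 / (γ - 1))) := by
      funext δ η
      simp only [Sfun]
      ring
    rwa [hfe] at hm
  refine ⟨⟨?_, ?_⟩, ?_⟩
  · intro hhy y hy
    exact forward_dir κ γ hκ hγ frad ftan hfr hft hfr1 hft1 hhy y hy
  · intro hid
    have hid' : ∀ y : ℝ, 0 < y → ftan y = frad y + 3 * (1 - γ) * y * Sfun frad y :=
      fun y hy => hid y hy
    by_cases hγ1 : γ = 1
    · subst hγ1
      refine ⟨_, isStoredEnergy_master κ 1 0 Real.log hγ frad ftan hfr ?_ ?_ ?_ hid'⟩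
      · exact Real.contDiffOn_log.mono (fun x hx => by simpa using ne_of_gt hx)
      · simp
      · intro η hη
        have h := Real.hasDerivAt_log (ne_of_gt hη)
        convert h using 1
        rw [show (1:ℝ) - 2 = -1 by norm_num]
        simp [Real.rpow_neg_one]
    · exact ⟨_, hconstruct hγ1 hid'⟩
  · intro hγ1 hid
    exact hconstruct hγ1 (fun y hy => hid y hy)
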